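/- Let b > 0, l < r, and for y > max(r, 0) define F(τ, y) = y − (y−l)N(d_−) − (y−r)N(d_+), where d_± = (log((y−r)/(y−l)) ± b²τ/2)/√(b²τ) and N is the standard normal CDF. Then for each fixed τ > 0, lim_{y→∞} F(τ, y) = √(2/π) e^{−b²τ/8} (r−l)/√(b²τ) + l·N(−√(b²τ)/2) + r·N(√(b²τ)/2). -/

import Mathlib

/-!
Write `s = √(b²τ)` and `u = log ((y - r) / (y - l))`, so that `d₊ = d₁ = u / s + s / 2`
and `d₋ = d₂ = u / s - s / 2`. As `y → ∞`, `u → 0` and `y u → l - r`. The symmetry `N(z) + N(-z) = 1`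
rewrites the forward price as `y g(u) + l N(d₂) + r N(d₁)` with `g(u) = N(-d₁) - N(d₂)`. Since `g`
vanishes at `u = 0`, `y g(u) → g'(0) (l - r) = 2 N'(s/2) (r - l) / s`.
-/

open Set Filter Real MeasureTheory

/-- The standard normal cumulative distribution function. -/
noncomputable def stdNormalCDF (z : ℝ) : ℝ :=
  (∫ t in Iic z, Real.exp (-(t^2) / 2)) / Real.sqrt (2 * Real.pi)

open Topology Asymptotics

noncomputable def stdNormalPDF (z : ℝ) : ℝ :=
  exp (-(z ^ 2) / 2) / √(2 * π)

lemma stdNormalPDF_neg (z : ℝ) : stdNormalPDF (-z) = stdNormalPDF z := by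
  simp [stdNormalPDF]

lemma two_mul_stdNormalPDF (z : ℝ) :
    2 * stdNormalPDF z = √(2 / π) * exp (-(z ^ 2) / 2) := by
  have h2π : √(2 * π) ≠ 0 := by positivity
  have hsqrt : √(2 / π) * √(2 * π) = 2 := by
    rw [← Real.sqrt_mul (by positivity), show 2 / π * (2 * π) = 2 ^ 2 by field_simp,
      Real.sqrt_sq zero_le_two]
  rw [stdNormalPDF, mul_div_assoc', div_eq_iff h2π]
  linear_combination (-exp (-(z ^ 2) / 2)) * hsqrt

lemma integrable_exp_neg_sq_div_two : Integrable (fun t : ℝ => exp (-(t ^ 2) / 2)) := by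
  simpa [div_eq_inv_mul] using integrable_exp_neg_mul_sq (by norm_num : (0 : ℝ) < 1 / 2)

lemma integral_exp_neg_sq_div_two : ∫ t : ℝ, exp (-(t ^ 2) / 2) = √(2 * π) := by
  simpa [div_eq_inv_mul] using integral_gaussian (1 / 2)

lemma hasDerivAt_stdNormalCDF (z : ℝ) : HasDerivAt stdNormalCDF (stdNormalPDF z) z := by
  have hcont : Continuous fun t : ℝ => exp (-(t ^ 2) / 2) := by fun_prop
  have hIic := integrable_exp_neg_sq_div_two.integrableOn (s := Iic (0 : ℝ))
  have hsplit : stdNormalCDF = fun x => ((∫ t in Iic (0 : ℝ), exp (-(t ^ 2) / 2)) +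
      ∫ t in (0 : ℝ)..x, exp (-(t ^ 2) / 2)) / √(2 * π) := by
    ext x
    rw [← intervalIntegral.integral_Iic_sub_Iic hIic integrable_exp_neg_sq_div_two.integrableOn]
    simp [stdNormalCDF]
  rw [hsplit]
  exact ((intervalIntegral.integral_hasDerivAt_right (hcont.intervalIntegrable _ _)
    hcont.stronglyMeasurable.stronglyMeasurableAtFilter hcont.continuousAt).const_add _).div_const _

lemma continuous_stdNormalCDF : Continuous stdNormalCDF :=
  continuous_iff_continuousAt.2 fun z => (hasDerivAt_stdNormalCDF z).continuousAt

lemma stdNormalCDF_add_stdNormalCDF_neg (z : ℝ) : stdNormalCDF z + stdNormalCDF (-z) = 1 := by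
  have hreflect : ∫ t in Iic (-z), exp (-(t ^ 2) / 2) = ∫ t in Ioi z, exp (-(t ^ 2) / 2) := by
    have h := integral_comp_neg_Iic (-z) (fun t => exp (-(t ^ 2) / 2))
    simp only [neg_sq, neg_neg] at h
    exact h
  rw [stdNormalCDF, stdNormalCDF, ← add_div, hreflect,
    intervalIntegral.integral_Iic_add_Ioi integrable_exp_neg_sq_div_two.integrableOn
      integrable_exp_neg_sq_div_two.integrableOn, integral_exp_neg_sq_div_two,
    div_self (by positivity)]

theorem HasDerivAt.tendsto_mul_sub_comp {α : Type*} {L : Filter α} {g : ℝ → ℝ} {g' a c : ℝ}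
    {u x : α → ℝ} (hg : HasDerivAt g g' a) (hu : Tendsto u L (𝓝 a))
    (hxu : Tendsto (fun t => x t * (u t - a)) L (𝓝 c)) :
    Tendsto (fun t => x t * (g (u t) - g a)) L (𝓝 (g' * c)) := by
  have hrem : (fun t => x t * (g (u t) - g a - (u t - a) * g')) =o[L] fun _ => (1 : ℝ) :=
    ((isBigO_refl x L).mul_isLittleO (hg.isLittleO.comp_tendsto hu)).trans_isBigO
      (hxu.isBigO_one ℝ)
  have hsum := (isLittleO_one_iff ℝ).1 hrem |>.add (hxu.const_mul g')
  simp only [zero_add] at hsum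
  exact hsum.congr fun t => by ring

lemma tendsto_sub_mul_log_div_sub_atTop (l r : ℝ) :
    Tendsto (fun y => (y - l) * log ((y - r) / (y - l))) atTop (𝓝 (l - r)) := by
  refine ((Real.tendsto_mul_log_one_add_div_atTop (l - r)).comp
    (tendsto_atTop_add_const_right _ (-l) tendsto_id)).congr' ?_
  filter_upwards [eventually_ne_atTop l] with y hy
  have hyl : y - l ≠ 0 := sub_ne_zero.2 hy
  simp only [Function.comp_apply, id, ← sub_eq_add_neg]
  congr 2
  field_simp
  ring

lemma tendsto_log_div_sub_atTop (l r : ℝ) :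
    Tendsto (fun y => log ((y - r) / (y - l))) atTop (𝓝 0) := by
  refine ((tendsto_sub_mul_log_div_sub_atTop l r).div_atTop
    (tendsto_atTop_add_const_right _ (-l) tendsto_id)).congr' ?_
  filter_upwards [eventually_ne_atTop l] with y hy
  rw [id, ← sub_eq_add_neg, mul_div_cancel_left₀ _ (sub_ne_zero.2 hy)]

lemma tendsto_mul_log_div_sub_atTop (l r : ℝ) :
    Tendsto (fun y => y * log ((y - r) / (y - l))) atTop (𝓝 (l - r)) := by
  have h := (tendsto_sub_mul_log_div_sub_atTop l r).add ((tendsto_log_div_sub_atTop l r).const_mul l)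
  rw [mul_zero, add_zero] at h
  exact h.congr fun y => by ring

lemma sub_mul_stdNormalCDF_sub_mul_stdNormalCDF (y l r d₁ d₂ : ℝ) :
    y - (y - l) * stdNormalCDF d₂ - (y - r) * stdNormalCDF d₁ =
      y * (stdNormalCDF (-d₁) - stdNormalCDF d₂) + l * stdNormalCDF d₂ + r * stdNormalCDF d₁ := by
  linear_combination (-y) * stdNormalCDF_add_stdNormalCDF_neg d₁

lemma hasDerivAt_stdNormalCDF_neg_sub_stdNormalCDF {s : ℝ} (hs : 0 < s) :
    HasDerivAt (fun x => stdNormalCDF (-((x + s ^ 2 / 2) / s)) - stdNormalCDF ((x - s ^ 2 / 2) / s))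
      (-(2 * stdNormalPDF (s / 2)) / s) 0 := by
  have hd₁ : HasDerivAt (fun x => -((x + s ^ 2 / 2) / s)) (-(1 / s)) 0 :=
    (((hasDerivAt_id 0).add_const _).div_const s).neg
  have hd₂ : HasDerivAt (fun x => (x - s ^ 2 / 2) / s) (1 / s) 0 :=
    ((hasDerivAt_id 0).sub_const _).div_const s
  refine (((hasDerivAt_stdNormalCDF _).comp 0 hd₁).sub
    ((hasDerivAt_stdNormalCDF _).comp 0 hd₂)).congr_deriv ?_
  rw [show (0 + s ^ 2 / 2) / s = s / 2 by field_simp; ring,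
    show (0 - s ^ 2 / 2) / s = -(s / 2) by field_simp; ring, stdNormalPDF_neg]
  ring

theorem tendsto_forward_atTop (l r : ℝ) {s : ℝ} (hs : 0 < s) :
    Tendsto
      (fun y : ℝ => y
        - (y - l) * stdNormalCDF ((log ((y - r) / (y - l)) - s ^ 2 / 2) / s)
        - (y - r) * stdNormalCDF ((log ((y - r) / (y - l)) + s ^ 2 / 2) / s))
      atTop
      (𝓝 (√(2 / π) * exp (-(s ^ 2) / 8) * (r - l) / s
        + l * stdNormalCDF (-s / 2) + r * stdNormalCDF (s / 2))) := by
  have hu := tendsto_log_div_sub_atTop l r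
  have hspread := (hasDerivAt_stdNormalCDF_neg_sub_stdNormalCDF hs).tendsto_mul_sub_comp hu
    (by simpa using tendsto_mul_log_div_sub_atTop l r)
  have hd₂ := (continuous_stdNormalCDF.tendsto _).comp ((hu.sub_const (s ^ 2 / 2)).div_const s)
  have hd₁ := (continuous_stdNormalCDF.tendsto _).comp ((hu.add_const (s ^ 2 / 2)).div_const s)
  have hlim := (hspread.add (hd₂.const_mul l)).add (hd₁.const_mul r)
  rw [show (0 - s ^ 2 / 2) / s = -(s / 2) by field_simp; ring,
    show (0 + s ^ 2 / 2) / s = s / 2 by field_simp; ring, sub_self] at hlim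
  simp only [sub_zero, Function.comp_apply] at hlim
  convert hlim using 2
  · exact sub_mul_stdNormalCDF_sub_mul_stdNormalCDF ..
  · rw [neg_div 2 s, two_mul_stdNormalPDF, show -((s / 2) ^ 2) / 2 = -(s ^ 2) / 8 by ring]
    ring

theorem qnv_forward_limit_at_infinity_general
    (b l r τ : ℝ) (hb : 0 < b) (hτ : 0 < τ) :
    Tendsto
      (fun y : ℝ => y
        - (y - l) * stdNormalCDF ((Real.log ((y - r)/(y - l)) - b^2*τ/2) / Real.sqrt (b^2*τ))
        - (y - r) * stdNormalCDF ((Real.log ((y - r)/(y - l)) + b^2*τ/2) / Real.sqrt (b^2*τ)))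
      atTop
      (nhds (Real.sqrt (2/Real.pi) * Real.exp (-b^2*τ/8) * (r - l) / Real.sqrt (b^2*τ)
        + l * stdNormalCDF (-Real.sqrt (b^2*τ)/2)
        + r * stdNormalCDF (Real.sqrt (b^2*τ)/2))) := by
  have hv : 0 < b ^ 2 * τ := by positivity
  obtain ⟨s, hs, hsv⟩ : ∃ s, 0 < s ∧ b ^ 2 * τ = s ^ 2 :=
    ⟨_, Real.sqrt_pos.2 hv, (Real.sq_sqrt hv.le).symm⟩
  rw [neg_mul, hsv, Real.sqrt_sq hs.le]
  exact tendsto_forward_atTop l r hs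

/-- Quadratic normal volatility model: for `b > 0`, `l < r`, and
`F(τ,y) = y - (y-l) N(d₋) - (y-r) N(d₊)`,
`d± = (log((y-r)/(y-l)) ± b²τ/2)/√(b²τ)`, one has, for each fixed `τ > 0`,
`lim_{y→∞} F(τ,y) = √(2/π) e^(-b²τ/8)(r-l)/√(b²τ) + l N(-√(b²τ)/2) + r N(√(b²τ)/2)`. -/
theorem qnv_forward_limit_at_infinity
    (b l r τ : ℝ) (hb : 0 < b) (hlr : l < r) (hτ : 0 < τ) :
    Tendsto
      (fun y : ℝ => y
        - (y - l) * stdNormalCDF ((Real.log ((y - r)/(y - l)) - b^2*τ/2) / Real.sqrt (b^2*τ))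
        - (y - r) * stdNormalCDF ((Real.log ((y - r)/(y - l)) + b^2*τ/2) / Real.sqrt (b^2*τ)))
      atTop
      (nhds (Real.sqrt (2/Real.pi) * Real.exp (-b^2*τ/8) * (r - l) / Real.sqrt (b^2*τ)
        + l * stdNormalCDF (-Real.sqrt (b^2*τ)/2)
        + r * stdNormalCDF (Real.sqrt (b^2*τ)/2))) :=
  qnv_forward_limit_at_infinity_general b l r τ hb hτ
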